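/- arXiv:1801.10009 — 4 statements merged into one kernel-verified Lean document; each statement's English description precedes it below -/
import Mathlib

section
/- Let 𝒜 = (Q, A, τ) be a Mealy automaton with Q and A both finite, let S be the semigroup generated by 𝒜, and let T be a finitely generated subsemigroup of S. Then T is infinite if and only if there exists ξ ∈ A^ω whose orbit T·ξ = {t·ξ : t ∈ T} is infinite. -/
/-!
Framework for Mealy automata `𝒜 = (Q, A, τ)` with `τ q a = (q·a, q@a)`.

* `Mealy.act τ q` is the endomorphism of the free monoid `A*` (modelled as `List A`)
  induced by the state `q`, defined by `q·(a⌢u) = (q·a)⌢((q@a)·u)`.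
* `Mealy.Sgp τ` is the semigroup (with identity adjoined, i.e. the submonoid) of
  `End(A*)` generated by the states.
* `Mealy.extω f ξ` is the extension of a length- and prefix-preserving endomorphism
  `f` of `A*` to right-infinite words `ξ : ℕ → A`: its `n`-th letter is the `n`-th
  letter of the image of the length-`(n+1)` prefix of `ξ`.
* `Mealy.catω v ξ` is the concatenation `v⌢ξ` of a finite word with an infinite word.
* `Mealy.orbit τ u` and `Mealy.orbitω τ ξ` are the orbits `S·u` and `S·ξ`.
* `Mealy.mval τ v` is `m_v = sup_{ξ ∈ A^ω} |S·(v⌢ξ)| ∈ ℕ∞`.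
* `Mealy.sect f w` is the section `f@w`, characterized for `f ∈ S` by
  `f·(w⌢u) = (f·w)⌢((f@w)·u)`.
-/

namespace Mealy

variable {Q A : Type*}

/-- The action of a state on a finite word: `q·(a⌢u) = (q·a)⌢((q@a)·u)`. -/
def act (τ : Q → A → A × Q) : Q → List A → List A
  | _, [] => []
  | q, a :: u => (τ q a).1 :: act τ (τ q a).2 u

/-- The semigroup `S ≤ End(A*)` generated by the states of the automaton
(as a submonoid of `Function.End (List A)`, where multiplication is composition). -/
def Sgp (τ : Q → A → A × Q) : Submonoid (Function.End (List A)) :=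
  Submonoid.closure { f : Function.End (List A) | ∃ q : Q, f = act τ q }

/-- Extension of a (length- and prefix-preserving) endomorphism of `A*` to `A^ω`:
the `n`-th letter of `f·ξ` is the `n`-th letter of the image of the prefix of `ξ`
of length `n+1`. -/
def extω (f : Function.End (List A)) (ξ : ℕ → A) : ℕ → A :=
  fun n => (f ((List.range (n + 1)).map ξ)).getD n (ξ n)

/-- Concatenation `v⌢ξ` of a finite word with a right-infinite word. -/
def catω (v : List A) (ξ : ℕ → A) : ℕ → A :=
  fun n => v.getD n (ξ (n - v.length))

/-- The orbit `S·u` of a finite word. -/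
def orbit (τ : Q → A → A × Q) (u : List A) : Set (List A) :=
  (fun f : Function.End (List A) => f u) '' (Sgp τ : Set (Function.End (List A)))

/-- The orbit `S·ξ` of a right-infinite word. -/
def orbitω (τ : Q → A → A × Q) (ξ : ℕ → A) : Set (ℕ → A) :=
  (fun f : Function.End (List A) => extω f ξ) '' (Sgp τ : Set (Function.End (List A)))

/-- `m_v = sup_{ξ ∈ A^ω} |S·(v⌢ξ)| ∈ ℕ ∪ {∞}`. -/
noncomputable def mval (τ : Q → A → A × Q) (v : List A) : ℕ∞ :=
  ⨆ ξ : ℕ → A, (orbitω τ (catω v ξ)).encard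

/-- The section `f@w` of an endomorphism of `A*` at the word `w`. -/
def sect (f : Function.End (List A)) (w : List A) : Function.End (List A) :=
  fun u => (f (w ++ u)).drop w.length

end Mealy

/-!
The orbit `T·ξ` is an image of `T`, so only the forward direction needs work; we prove it for the
monoid `M = T ∪ {1}`. Call words `u`, `v` equivalent when any two elements of `M` agree at `u`
iff they agree at `v`, and every element of `M` has the same section at `u` and at `v`. This is a
right congruence. If finitely many words meet every class, `M` is determined by its action on
them and is finite. Otherwise the words of minimal length in their class form an infinite
prefix-closed set, and Kőnig's lemma yields a branch `ξ` whose prefixes are pairwise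
inequivalent. As the automaton is finite, the generators of `T` have finitely many sections, so
words whose orbits have bounded size fall into finitely many classes; hence the orbits of the
prefixes of `ξ` are unbounded, and so is `M·ξ`.
-/

lemma Set.Finite.exists_fin_range_eq {α : Type*} {s : Set α} {K : ℕ} (hs : s.Finite)
    (hne : s.Nonempty) (hK : s.ncard ≤ K) : ∃ σ : Fin K → α, Set.range σ = s := by
  obtain ⟨n, f, hf, rfl⟩ := hs.fin_param
  rw [Set.ncard_range_of_injective hf, Nat.card_eq_fintype_card, Fintype.card_fin] at hK
  obtain ⟨a, ha⟩ := hne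
  refine ⟨fun i => if h : (i : ℕ) < n then f ⟨i, h⟩ else a, subset_antisymm ?_ ?_⟩
  · rintro _ ⟨i, rfl⟩
    dsimp only
    split_ifs
    exacts [⟨_, rfl⟩, ha]
  · rintro _ ⟨j, rfl⟩
    exact ⟨⟨j, j.2.trans_le hK⟩, dif_pos j.2⟩

lemma List.exists_forall_map_range_mem_of_infinite {A : Type*} [Finite A] {W : Set (List A)}
    (hW : W.Infinite) (hprefix : ∀ u w, u ++ w ∈ W → u ∈ W) :
    ∃ ξ : ℕ → A, ∀ n, (List.range n).map ξ ∈ W := by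
  have hlong : ∀ n, ∃ w ∈ W, n ≤ w.length := fun n => by
    by_contra! h
    exact hW ((List.finite_length_lt A n).subset h)
  have htake : ∀ w ∈ W, ∀ n, w.take n ∈ W := fun w hw n =>
    hprefix _ (w.drop n) ((List.take_append_drop n w).symm ▸ hw)
  let α n := {w // w ∈ W ∧ w.length = n}
  have (n : ℕ) : Finite (α n) :=
    ((List.finite_length_eq A n).subset fun _ hw => hw.2).to_subtype
  have (n : ℕ) : Nonempty (α n) := by
    obtain ⟨w, hw, hn⟩ := hlong n
    exact ⟨w.take n, htake w hw n, by simpa using hn⟩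
  obtain ⟨f, hf⟩ := exists_seq_forall_proj_of_forall_finite (α := α)
    (fun {i _} _ w => ⟨w.1.take i, htake _ w.2.1 i, by simp [w.2.2, *]⟩)
    (fun _ w => Subtype.ext (List.take_of_length_le w.2.2.le))
    (fun _ _ _ hij _ w => Subtype.ext (by simp [List.take_take, min_eq_left hij]))
    (fun _ _ => Set.toFinite _)
  have hlen (n : ℕ) : (f n).1.length = n := (f n).2.2
  refine ⟨fun n => (f (n + 1)).1[n]'(by rw [hlen]; omega), fun n => ?_⟩
  convert (f n).2.1 using 1
  refine List.ext_getElem (by simp [hlen]) fun k hk _ => ?_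
  have hkn : k + 1 ≤ n := by simpa using hk
  rw [List.getElem_map]
  generalize hx : (List.range n)[k]'(by simpa using hk) = x
  rw [List.getElem_range] at hx
  subst hx
  simp [← congrArg Subtype.val (hf hkn)]

namespace Mealy

section

variable {A : Type*}

lemma sect_one (u : List A) : sect (1 : Function.End (List A)) u = 1 :=
  funext fun _ => List.drop_left' rfl

lemma sect_append (f : Function.End (List A)) (u v : List A) :
    sect f (u ++ v) = sect (sect f u) v := by
  funext w
  simp only [sect, List.append_assoc, List.length_append, List.drop_drop]

/-- Length- and prefix-preserving maps, i.e. endomorphisms of the rooted tree `A*`. -/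
def TreeEnd (A : Type*) : Submonoid (Function.End (List A)) where
  carrier := {f | (∀ u, (f u).length = u.length) ∧ ∀ u w, f (u ++ w) = f u ++ sect f u w}
  one_mem' := ⟨fun _ => rfl, fun u w => by rw [sect_one]; rfl⟩
  mul_mem' := by
    rintro f g ⟨hf_len, hf_app⟩ ⟨hg_len, hg_app⟩
    refine ⟨fun u => (hf_len _).trans (hg_len u), fun u w => ?_⟩
    show f (g (u ++ w)) = f (g u) ++ (f (g (u ++ w))).drop u.length
    rw [hg_app, hf_app, List.drop_left' (by rw [hf_len, hg_len])]

namespace TreeEnd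

variable {f g : Function.End (List A)}

lemma length_apply (hf : f ∈ TreeEnd A) (u : List A) : (f u).length = u.length := hf.1 u

lemma apply_append (hf : f ∈ TreeEnd A) (u w : List A) : f (u ++ w) = f u ++ sect f u w :=
  hf.2 u w

lemma sect_mul (f : Function.End (List A)) (hg : g ∈ TreeEnd A) (u : List A) :
    sect (f * g) u = sect f (g u) * sect g u := by
  funext w
  show (f (g (u ++ w))).drop u.length = (f (g u ++ sect g u w)).drop (g u).length
  rw [apply_append hg, length_apply hg]

lemma apply_take (hf : f ∈ TreeEnd A) (n : ℕ) (u : List A) : f (u.take n) = (f u).take n := by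
  rcases le_total u.length n with h | h
  · rw [List.take_of_length_le h, List.take_of_length_le (by rwa [length_apply hf])]
  · conv_rhs => rw [← List.take_append_drop n u, apply_append hf]
    rw [List.take_left' (by rw [length_apply hf, List.length_take, min_eq_left h])]

lemma map_range_extω (hf : f ∈ TreeEnd A) (ξ : ℕ → A) (n : ℕ) :
    (List.range n).map (extω f ξ) = f ((List.range n).map ξ) := by
  refine List.ext_getElem (by simp [length_apply hf]) fun k hk _ => ?_
  have hprefix : (List.range (k + 1)).map ξ = ((List.range n).map ξ).take (k + 1) := by
    rw [← List.map_take, List.take_range, min_eq_left (by simpa using hk)]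
  simp only [List.getElem_map, List.getElem_range, extω, hprefix, apply_take hf,
    List.getD_eq_getElem?_getD, List.getElem?_take_of_lt (Nat.lt_succ_self k)]
  rw [List.getElem?_eq_getElem, Option.getD_some]

end TreeEnd

section Automaton

variable {Q : Type*} (τ : Q → A → A × Q)

lemma length_act (q : Q) (u : List A) : (act τ q u).length = u.length := by
  induction u generalizing q with
  | nil => rfl
  | cons a u ih => simp [act, ih]

lemma exists_act_append (q : Q) (u : List A) :
    ∃ q', ∀ w, act τ q (u ++ w) = act τ q u ++ act τ q' w := by
  induction u generalizing q with
  | nil => exact ⟨q, fun _ => rfl⟩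
  | cons a u ih =>
    obtain ⟨q', hq'⟩ := ih (τ q a).2
    exact ⟨q', fun w => by simp [act, hq']⟩

lemma exists_sect_act (q : Q) (u : List A) : ∃ q', sect (act τ q) u = act τ q' := by
  obtain ⟨q', hq'⟩ := exists_act_append τ q u
  refine ⟨q', funext fun w => ?_⟩
  show (act τ q (u ++ w)).drop u.length = act τ q' w
  rw [hq', List.drop_left' (length_act τ q u)]

lemma act_mem_treeEnd (q : Q) : (act τ q : Function.End (List A)) ∈ TreeEnd A := by
  refine ⟨length_act τ q, fun u w => ?_⟩
  obtain ⟨q', hq'⟩ := exists_act_append τ q u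
  show _ = _ ++ (act τ q (u ++ w)).drop u.length
  rw [hq' w, List.drop_left' (length_act τ q u)]

lemma sgp_le_treeEnd : Sgp τ ≤ TreeEnd A :=
  Submonoid.closure_le.mpr fun _ ⟨q, hq⟩ => hq ▸ act_mem_treeEnd τ q

lemma finite_range_sect_of_mem_sgp [Finite Q] {f : Function.End (List A)} (hf : f ∈ Sgp τ) :
    (Set.range (sect f)).Finite := by
  induction hf using Submonoid.closure_induction with
  | mem f hf =>
    obtain ⟨q, rfl⟩ := hf
    refine (Set.finite_range (fun q => (act τ q : Function.End (List A)))).subset ?_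
    rintro _ ⟨u, rfl⟩
    exact (exists_sect_act τ q u).imp fun _ h => h.symm
  | one => exact (Set.finite_singleton 1).subset (Set.range_subset_iff.mpr sect_one)
  | mul f g _ hg hf_sect hg_sect =>
    refine (hf_sect.image2 (· * ·) hg_sect).subset ?_
    rintro _ ⟨u, rfl⟩
    exact ⟨_, ⟨g u, rfl⟩, _, ⟨u, rfl⟩, (TreeEnd.sect_mul f (sgp_le_treeEnd τ hg) u).symm⟩

end Automaton

section

variable {M : Submonoid (Function.End (List A))} {F : Set (Function.End (List A))}

def wordOrbit (M : Submonoid (Function.End (List A))) (u : List A) : Set (List A) :=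
  (fun t : Function.End (List A) => t u) '' M

lemma mem_wordOrbit_self (u : List A) : u ∈ wordOrbit M u := ⟨1, M.one_mem, rfl⟩

lemma wordOrbit_finite [Finite A] (hM : M ≤ TreeEnd A) (u : List A) :
    (wordOrbit M u).Finite :=
  (List.finite_length_eq A u.length).subset <| by
    rintro _ ⟨t, ht, rfl⟩
    exact TreeEnd.length_apply (hM ht) u

def OrbitEquiv (M : Submonoid (Function.End (List A))) (u v : List A) : Prop :=
  (∀ t ∈ M, ∀ s ∈ M, t u = s u ↔ t v = s v) ∧ ∀ t ∈ M, sect t u = sect t v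

namespace OrbitEquiv

variable {u v w : List A}

lemma refl (u : List A) : OrbitEquiv M u u := ⟨fun _ _ _ _ => Iff.rfl, fun _ _ => rfl⟩

lemma symm (h : OrbitEquiv M u v) : OrbitEquiv M v u :=
  ⟨fun t ht s hs => (h.1 t ht s hs).symm, fun t ht => (h.2 t ht).symm⟩

lemma trans (h : OrbitEquiv M u v) (h' : OrbitEquiv M v w) : OrbitEquiv M u w :=
  ⟨fun t ht s hs => (h.1 t ht s hs).trans (h'.1 t ht s hs),
    fun t ht => (h.2 t ht).trans (h'.2 t ht)⟩

lemma append (hM : M ≤ TreeEnd A) (h : OrbitEquiv M u v) (w : List A) :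
    OrbitEquiv M (u ++ w) (v ++ w) := by
  have split : ∀ x, ∀ t ∈ M, ∀ s ∈ M, t (x ++ w) = s (x ++ w) ↔
      t x = s x ∧ sect t x w = sect s x w := fun x t ht s hs => by
    rw [TreeEnd.apply_append (hM ht), TreeEnd.apply_append (hM hs)]
    exact List.append_eq_append_iff_of_size_eq_left
      (by rw [TreeEnd.length_apply (hM ht), TreeEnd.length_apply (hM hs)])
  refine ⟨fun t ht s hs => ?_, fun t ht => ?_⟩
  · rw [split u t ht s hs, split v t ht s hs, h.1 t ht s hs, h.2 t ht, h.2 s hs]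
  · rw [sect_append, sect_append, h.2 t ht]

end OrbitEquiv

lemma finite_of_forall_exists_orbitEquiv [Finite A] (hM : M ≤ TreeEnd A) {R : Set (List A)}
    (hR : R.Finite) (hcover : ∀ w, ∃ u ∈ R, OrbitEquiv M w u) :
    (M : Set (Function.End (List A))).Finite := by
  have : Finite R := hR.to_subtype
  refine Set.Finite.of_finite_image (f := fun t (u : R) => t u)
    ((Set.Finite.pi fun u => wordOrbit_finite hM u.1).subset ?_) ?_
  · rintro _ ⟨t, ht, rfl⟩ u -
    exact ⟨t, ht, rfl⟩
  · intro t ht s hs hts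
    funext w
    obtain ⟨u, hu, hwu⟩ := hcover w
    exact (hwu.1 t ht s hs).mpr (congrFun hts ⟨u, hu⟩)

lemma orbitEquiv_of_bisimulation (hFT : F ⊆ TreeEnd A) {ι : Type*} (σ ρ : ι → List A)
    (hker : ∀ i j, σ i = σ j ↔ ρ i = ρ j)
    (hstep : ∀ g ∈ F, ∀ i, ∃ j, σ j = g (σ i) ∧ ρ j = g (ρ i))
    (hsect : ∀ g ∈ F, ∀ i, sect g (σ i) = sect g (ρ i)) (i₀ : ι) :
    OrbitEquiv (Submonoid.closure F) (σ i₀) (ρ i₀) := by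
  have hM : Submonoid.closure F ≤ TreeEnd A := Submonoid.closure_le.mpr hFT
  have step : ∀ t ∈ Submonoid.closure F, ∀ i, ∃ j, σ j = t (σ i) ∧ ρ j = t (ρ i) := by
    intro t ht
    induction ht using Submonoid.closure_induction with
    | mem g hg => exact hstep g hg
    | one => exact fun i => ⟨i, rfl, rfl⟩
    | mul f g _ _ hf hg =>
      intro i
      obtain ⟨j, hσj, hρj⟩ := hg i
      obtain ⟨k, hσk, hρk⟩ := hf j
      exact ⟨k, hσk.trans (congrArg f hσj), hρk.trans (congrArg f hρj)⟩
  refine ⟨fun t ht s hs => ?_, fun t ht => ?_⟩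
  · obtain ⟨j, hσj, hρj⟩ := step t ht i₀
    obtain ⟨k, hσk, hρk⟩ := step s hs i₀
    rw [← hσj, ← hρj, ← hσk, ← hρk]
    exact hker j k
  · induction ht using Submonoid.closure_induction generalizing i₀ with
    | mem g hg => exact hsect g hg i₀
    | one => rw [sect_one, sect_one]
    | mul f g _ hg' hf hg =>
      obtain ⟨j, hσj, hρj⟩ := step g hg' i₀
      rw [TreeEnd.sect_mul f (hM hg'), TreeEnd.sect_mul f (hM hg'), ← hσj, ← hρj, hf j, hg i₀]

/-- An orbit of size at most `K`, listed by `Fin K` and decorated with the action and the sections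
of the generators, can look only finitely many ways, because the generators have finitely many
sections. -/
lemma exists_orbitEquiv_of_ncard_wordOrbit_le [Finite A] (hF : F.Finite)
    (hFT : F ⊆ TreeEnd A) (hFsect : ∀ g ∈ F, (Set.range (sect g)).Finite)
    (p : ℕ → List A) (K : ℕ) (hK : ∀ n, (wordOrbit (Submonoid.closure F) (p n)).ncard ≤ K) :
    ∃ n m, n ≠ m ∧ OrbitEquiv (Submonoid.closure F) (p n) (p m) := by
  have hM : Submonoid.closure F ≤ TreeEnd A := Submonoid.closure_le.mpr hFT
  set P := ⋃ g ∈ F, Set.range (sect g)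
  have : Finite F := hF.to_subtype
  have : Finite P := (hF.biUnion hFsect).to_subtype
  choose σ hσ using fun n => (wordOrbit_finite hM (p n)).exists_fin_range_eq
    ⟨_, mem_wordOrbit_self (p n)⟩ (hK n)
  choose i₀ hi₀ using fun n => (hσ n).symm ▸ mem_wordOrbit_self (p n)
  have hnext : ∀ n (g : F) i, ∃ j, σ n j = g.1 (σ n i) := by
    intro n g i
    obtain ⟨t, ht, hti⟩ : σ n i ∈ wordOrbit (Submonoid.closure F) (p n) := hσ n ▸ ⟨i, rfl⟩
    have hgt : g.1 (σ n i) ∈ Set.range (σ n) := hσ n ▸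
      ⟨g.1 * t, Submonoid.mul_mem _ (Submonoid.subset_closure g.2) ht, by rw [← hti]; rfl⟩
    exact hgt
  choose next hnext using hnext
  obtain ⟨n, m, hnm, heq⟩ := Finite.exists_ne_map_eq_of_infinite fun n =>
    (i₀ n, fun i j => σ n i = σ n j, next n,
      fun (g : F) i => (⟨sect g (σ n i), Set.mem_biUnion g.2 ⟨_, rfl⟩⟩ : P))
  simp only [Prod.mk.injEq] at heq
  obtain ⟨hi, hker, hnext_eq, hsect⟩ := heq
  refine ⟨n, m, hnm, ?_⟩
  rw [← hi₀ n, ← hi₀ m, hi]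
  refine orbitEquiv_of_bisimulation hFT (σ n) (σ m) (fun i j => (congrFun₂ hker i j).to_iff)
    (fun g hg i => ⟨next n ⟨g, hg⟩ i, hnext n _ i, ?_⟩)
    (fun g hg i => congrArg Subtype.val (congrFun₂ hsect ⟨g, hg⟩ i)) _
  rw [congrFun₂ hnext_eq, hnext m _ i]

def shortestReps (M : Submonoid (Function.End (List A))) : Set (List A) :=
  {w | ∀ v, OrbitEquiv M v w → w.length ≤ v.length}

lemma exists_orbitEquiv_mem_shortestReps (w : List A) :
    ∃ u ∈ shortestReps M, OrbitEquiv M w u := by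
  obtain ⟨u, hwu, hmin⟩ := (measure List.length).wf.has_min {u | OrbitEquiv M w u}
    ⟨w, OrbitEquiv.refl w⟩
  exact ⟨u, fun v hvu => not_lt.mp (hmin v (hwu.trans hvu.symm)), hwu⟩

lemma mem_shortestReps_of_append_mem (hM : M ≤ TreeEnd A) {u w : List A}
    (h : u ++ w ∈ shortestReps M) : u ∈ shortestReps M := fun v hvu => by
  simpa using h _ (hvu.append hM w)

lemma ncard_wordOrbit_map_range_le (hM : M ≤ TreeEnd A) {ξ : ℕ → A}
    (hfin : ((fun f : Function.End (List A) => extω f ξ) '' M).Finite) (n : ℕ) :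
    (wordOrbit M ((List.range n).map ξ)).ncard ≤
      ((fun f : Function.End (List A) => extω f ξ) '' M).ncard := by
  have hsub : wordOrbit M ((List.range n).map ξ) ⊆
      (fun η : ℕ → A => (List.range n).map η) '' ((fun f => extω f ξ) '' M) := by
    rintro _ ⟨t, ht, rfl⟩
    exact ⟨extω t ξ, ⟨t, ht, rfl⟩, TreeEnd.map_range_extω (hM ht) ξ n⟩
  exact (Set.ncard_le_ncard hsub (hfin.image _)).trans (Set.ncard_image_le hfin)

theorem exists_infinite_orbitω_of_infinite_closure [Finite A] (hF : F.Finite)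
    (hFT : F ⊆ TreeEnd A) (hFsect : ∀ g ∈ F, (Set.range (sect g)).Finite)
    (hinf : (Submonoid.closure F : Set (Function.End (List A))).Infinite) :
    ∃ ξ : ℕ → A, ((fun f : Function.End (List A) => extω f ξ) ''
      (Submonoid.closure F : Set (Function.End (List A)))).Infinite := by
  have hM : Submonoid.closure F ≤ TreeEnd A := Submonoid.closure_le.mpr hFT
  have hW : (shortestReps (Submonoid.closure F)).Infinite := fun hfin =>
    hinf (finite_of_forall_exists_orbitEquiv hM hfin exists_orbitEquiv_mem_shortestReps)
  obtain ⟨ξ, hξ⟩ := List.exists_forall_map_range_mem_of_infinite hW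
    fun _ _ => mem_shortestReps_of_append_mem hM
  refine ⟨ξ, fun hfin => ?_⟩
  obtain ⟨n, m, hnm, hequiv⟩ := exists_orbitEquiv_of_ncard_wordOrbit_le hF hFT hFsect
    (fun n => (List.range n).map ξ) _ (ncard_wordOrbit_map_range_le hM hfin)
  have hn := hξ n _ hequiv.symm
  have hm := hξ m _ hequiv
  simp only [List.length_map, List.length_range] at hn hm
  omega

end

end

/-- For a Mealy automaton with `Q` and `A` finite and `S` the generated
semigroup, a finitely generated subsemigroup `T ≤ S` is infinite iff some
right-infinite word has infinite `T`-orbit. -/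
theorem subsemigroup_infinite_iff_exists_infinite_orbit {Q A : Type*} [Finite Q] [Finite A]
    (τ : Q → A → A × Q) (T : Subsemigroup (Function.End (List A)))
    (hTS : (T : Set (Function.End (List A))) ⊆ (Sgp τ : Set (Function.End (List A))))
    (hfg : ∃ F : Set (Function.End (List A)), F.Finite ∧ T = Subsemigroup.closure F) :
    (T : Set (Function.End (List A))).Infinite ↔
      ∃ ξ : ℕ → A, ((fun f : Function.End (List A) => extω f ξ) ''
        (T : Set (Function.End (List A)))).Infinite := by
  refine ⟨fun hT => ?_, fun ⟨ξ, hξ⟩ hT => hξ (hT.image _)⟩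
  obtain ⟨F, hF, rfl⟩ := hfg
  have hFS : F ⊆ Sgp τ := Subsemigroup.subset_closure.trans hTS
  have hM := Submonoid.closure_eq_one_union F
  obtain ⟨ξ, hξ⟩ := exists_infinite_orbitω_of_infinite_closure hF
    (hFS.trans (sgp_le_treeEnd τ)) (fun g hg => finite_range_sect_of_mem_sgp τ (hFS hg))
    (hM ▸ hT.mono Set.subset_union_right)
  rw [hM, Set.image_union, Set.infinite_union] at hξ
  exact ⟨ξ, hξ.resolve_left (Set.toFinite _).not_infinite⟩

end Mealy
end

section
/- Let S be a finitely generated semigroup acting faithfully on a set X, and suppose there exists M ∈ ℕ such that every orbit S·x = {s·x : s ∈ S} satisfies |S·x| ≤ M. Then S is finite. -/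
/-!
Restricting the action to the sets `{x} ∪ S • x`, each of size at most `M + 1` and invariant under
`S`, and transporting each restriction into `Fin (M + 1)`, faithfulness embeds `S` into a power
`X → A` of the finite semigroup `A = Function.End (Fin (M + 1))`. Such powers are locally finite:
a product of generators evaluated at `x` depends only on the values of the generators at `x`, so the
subsemigroup generated by a finite set `F` is the image of the finite semigroup `(F → A) → A`.
-/

open Function

namespace Subsemigroup

theorem finite_closure_of_finite_pi {X A : Type*} [Mul A] [Finite A] {F : Set (X → A)}
    (hF : F.Finite) : (closure F : Set (X → A)).Finite := by
  have := hF.to_subtype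
  let precomp : ((F → A) → A) →ₙ* (X → A) :=
    { toFun := fun c x => c fun f => f.1 x
      map_mul' := fun _ _ => rfl }
  have hle : closure F ≤ precomp.srange :=
    closure_le.2 fun f hf => ⟨fun g => g ⟨f, hf⟩, rfl⟩
  exact (Set.finite_range precomp).subset hle

end Subsemigroup

theorem finite_of_injective_mulHom_pi {S X A : Type*} [Mul S] [Mul A] [Finite A]
    (hfg : ∃ F : Set S, F.Finite ∧ Subsemigroup.closure F = ⊤) {φ : S →ₙ* (X → A)}
    (hφ : Injective φ) : Finite S := by
  obtain ⟨F, hF, hFtop⟩ := hfg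
  have hrange : φ.srange = Subsemigroup.closure (φ '' F) := by
    rw [MulHom.srange_eq_map, ← hFtop, MulHom.map_mclosure]
  have hfin : (Set.range φ).Finite := by
    rw [← MulHom.coe_srange, hrange]
    exact Subsemigroup.finite_closure_of_finite_pi (hF.image φ)
  have := hfin.to_subtype
  exact Finite.of_injective_finite_range hφ

instance Function.End.finite {α : Type*} [Finite α] : Finite (Function.End α) :=
  inferInstanceAs (Finite (α → α))

namespace Function.LeftInverse

variable {α β : Type*} {e : α → β} {r : β → α}

def endMulHom (h : LeftInverse r e) : Function.End α →ₙ* Function.End β where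
  toFun f := e ∘ f ∘ r
  map_mul' f g := by
    funext b
    change e (f (g (r b))) = e (f (r (e (g (r b)))))
    rw [h]

theorem endMulHom_injective (h : LeftInverse r e) : Injective h.endMulHom := by
  intro f g hfg
  funext a
  have := congrFun hfg (e a)
  change e (f (r (e a))) = e (g (r (e a))) at this
  rwa [h, h.injective.eq_iff] at this

end Function.LeftInverse

theorem Function.End.exists_injective_mulHom_fin {α : Type*} [Finite α] [Nonempty α] {n : ℕ}
    (h : Nat.card α ≤ n) : ∃ φ : Function.End α →ₙ* Function.End (Fin n), Injective φ := by
  have := Fintype.ofFinite α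
  obtain ⟨e⟩ : Nonempty (α ↪ Fin n) :=
    Function.Embedding.nonempty_of_card_le (by simpa [Nat.card_eq_fintype_card] using h)
  exact ⟨_, (leftInverse_invFun e.injective).endMulHom_injective⟩

namespace SemigroupAction

variable {S X : Type*} [Semigroup S] [SemigroupAction S X]

def toEndOfMapsTo {Y : Set X} (hY : ∀ s : S, Set.MapsTo (s • ·) Y Y) : S →ₙ* Function.End Y where
  toFun s := (hY s).restrict
  map_mul' s t := by
    funext y
    exact Subtype.ext (mul_smul s t (y : X))

variable (S) in
/-- Without an identity `x` need not lie in its own orbit, so it is added by hand. -/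
def cyclicSubact (x : X) : Set X := insert x (Set.range fun s : S => s • x)

theorem mem_cyclicSubact_self (x : X) : x ∈ cyclicSubact S x := Set.mem_insert _ _

theorem mapsTo_cyclicSubact (s : S) (x : X) :
    Set.MapsTo (s • ·) (cyclicSubact S x) (cyclicSubact S x) := by
  rintro _ (rfl | ⟨t, rfl⟩)
  · exact Set.mem_insert_of_mem _ ⟨s, rfl⟩
  · exact Set.mem_insert_of_mem _ ⟨s * t, mul_smul s t x⟩

theorem exists_injective_mulHom_pi_end_fin [FaithfulSMul S X] {n : ℕ}
    (horb : ∀ x : X, (Set.range fun s : S => s • x).encard ≤ n) :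
    ∃ φ : S →ₙ* (X → Function.End (Fin (n + 1))), Injective φ := by
  have hcard (x : X) : Finite (cyclicSubact S x) ∧ Nat.card (cyclicSubact S x) ≤ n + 1 := by
    have hle : (cyclicSubact S x).encard ≤ (n + 1 : ℕ) := by
      push_cast
      exact (Set.encard_insert_le _ _).trans (by gcongr; exact horb x)
    obtain ⟨hfin, hncard⟩ := Set.encard_le_coe_iff_finite_ncard_le.1 hle
    exact ⟨hfin.to_subtype, by rwa [Nat.card_coe_set_eq]⟩
  have (x : X) : Nonempty (cyclicSubact S x) := ⟨⟨x, mem_cyclicSubact_self x⟩⟩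
  have (x : X) := (hcard x).1
  choose ψ hψ using fun x => Function.End.exists_injective_mulHom_fin (hcard x).2
  refine ⟨MulHom.pi fun x => (ψ x).comp (toEndOfMapsTo (mapsTo_cyclicSubact · x)), ?_⟩
  intro s t hst
  refine eq_of_smul_eq_smul (α := X) fun x => ?_
  have := hψ x (congrFun hst x)
  exact congrArg Subtype.val (congrFun this ⟨x, mem_cyclicSubact_self x⟩)

end SemigroupAction

/-- a finitely generated semigroup acting faithfully on a set with all
orbits of size at most `M` is finite. -/
theorem finite_of_faithful_bounded_orbits {S X : Type*} [Semigroup S] [SMul S X]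
    (hact : ∀ (s t : S) (x : X), (s * t) • x = s • t • x)
    (hfaithful : ∀ s t : S, s ≠ t → ∃ x : X, s • x ≠ t • x)
    (hfg : ∃ F : Set S, F.Finite ∧ Subsemigroup.closure F = ⊤)
    (M : ℕ) (horb : ∀ x : X, (Set.range fun s : S => s • x).encard ≤ M) :
    Finite S := by
  let _ : SemigroupAction S X := { mul_smul := hact }
  have : FaithfulSMul S X := ⟨fun {s t} h => by
    by_contra hne
    obtain ⟨x, hx⟩ := hfaithful s t hne
    exact hx (h x)⟩
  obtain ⟨φ, hφ⟩ := SemigroupAction.exists_injective_mulHom_pi_end_fin horb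
  exact finite_of_injective_mulHom_pi hfg hφ
end

section
/- There exists a Mealy automaton 𝒜 = (Q, A, τ) with A a finite alphabet (and Q an infinite set of states) such that the semigroup S generated by 𝒜 is infinite, yet for every ξ ∈ A^ω the orbit S·ξ is finite. -/
/-!
Framework for Mealy automata `𝒜 = (Q, A, τ)` with `τ q a = (q·a, q@a)`.

* `Mealy.act τ q` is the endomorphism of the free monoid `A*` (modelled as `List A`)
  induced by the state `q`, defined by `q·(a⌢u) = (q·a)⌢((q@a)·u)`.
* `Mealy.Sgp τ` is the semigroup (with identity adjoined, i.e. the submonoid) of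
  `End(A*)` generated by the states.
* `Mealy.extω f ξ` is the extension of a length- and prefix-preserving endomorphism
  `f` of `A*` to right-infinite words `ξ : ℕ → A`: its `n`-th letter is the `n`-th
  letter of the image of the length-`(n+1)` prefix of `ξ`.
* `Mealy.catω v ξ` is the concatenation `v⌢ξ` of a finite word with an infinite word.
* `Mealy.orbit τ u` and `Mealy.orbitω τ ξ` are the orbits `S·u` and `S·ξ`.
* `Mealy.mval τ v` is `m_v = sup_{ξ ∈ A^ω} |S·(v⌢ξ)| ∈ ℕ∞`.
* `Mealy.sect f w` is the section `f@w`, characterized for `f ∈ S` by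
  `f·(w⌢u) = (f·w)⌢((f@w)·u)`.
-/

namespace Mealy

variable {Q A : Type*}

def tog : Fin 3 → Fin 3 := fun a => if a = 1 then 2 else if a = 2 then 1 else 0

def τ₀ : ℕ → Fin 3 → Fin 3 × ℕ
  | 0, a => (a, 0)
  | 1, a => (tog a, 0)
  | k+2, a => if a = 0 then (0, k+1) else (a, 0)

/-- toggle the first nonzero letter -/
def tf : List (Fin 3) → List (Fin 3)
  | [] => []
  | a :: u => if a = 0 then 0 :: tf u else tog a :: u

lemma tog_tog : ∀ a, tog (tog a) = a := by decide
lemma tog_zero : tog 0 = 0 := rfl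
lemma tog_ne_zero : ∀ a : Fin 3, a ≠ 0 → tog a ≠ 0 := by decide

lemma act_zero : ∀ u, act τ₀ 0 u = u := by
  intro u; induction u with
  | nil => rfl
  | cons a v ih => simp [act, τ₀, ih]

lemma act_succ : ∀ (u : List (Fin 3)) (k : ℕ),
    act τ₀ (k+1) u = u ∨ act τ₀ (k+1) u = tf u := by
  intro u; induction u with
  | nil => intro k; left; rfl
  | cons a v ih =>
    intro k
    match k with
    | 0 =>
      by_cases h : a = 0
      · left; simp [act, τ₀, h, tog_zero, act_zero]
      · right; simp [act, τ₀, tf, h, act_zero]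
    | k+1 =>
      by_cases h : a = 0
      · rcases ih k with h2 | h2
        · left; simp [act, τ₀, h, h2]
        · right; simp [act, τ₀, tf, h, h2]
      · left; simp [act, τ₀, h, act_zero]

lemma tf_tf : ∀ u, tf (tf u) = u := by
  intro u; induction u with
  | nil => rfl
  | cons a v ih =>
    by_cases h : a = 0
    · simp [tf, h, ih]
    · simp [tf, h, tog_ne_zero a h, tog_tog]

lemma tf_zero : ∀ u : List (Fin 3), (∀ x ∈ u, x = 0) → tf u = u := by
  intro u; induction u with
  | nil => intro; rfl
  | cons a v ih =>
    intro h
    have ha := h a (by simp)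
    simp [tf, ha, ih fun x hx => h x (by simp [hx])]

lemma sgp_cases {f : Function.End (List (Fin 3))} (hf : f ∈ Sgp τ₀) :
    ∀ u, f u = u ∨ f u = tf u := by
  induction hf using Submonoid.closure_induction with
  | mem g hg =>
    obtain ⟨q, rfl⟩ := hg
    intro u
    match q with
    | 0 => exact Or.inl (act_zero u)
    | k+1 => exact act_succ u k
  | one => intro u; left; rfl
  | mul f g hf hg ihf ihg =>
    intro u
    have hfg : (f * g) u = f (g u) := rfl
    rw [hfg]
    rcases ihg u with h | h <;> rw [h]
    · exact ihf u
    · rcases ihf (tf u) with h2 | h2 <;> rw [h2]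
      · exact Or.inr rfl
      · exact Or.inl (tf_tf u)

lemma act_repl : ∀ (n k : ℕ), act τ₀ k (List.replicate n 0 ++ [1]) =
    List.replicate n 0 ++ [if k = n+1 then (2 : Fin 3) else 1] := by
  intro n
  induction n with
  | zero =>
    intro k
    match k with
    | 0 => simp [act, τ₀]
    | 1 => simp [act, τ₀, tog]
    | k+2 => simp [act, τ₀]
  | succ n ih =>
    intro k
    rw [List.replicate_succ, List.cons_append, List.cons_append]
    match k with
    | 0 =>
      have : (0 = n+1+1) = False := by simp
      simp [act, τ₀, act_zero]
    | 1 =>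
      simp [act, τ₀, tog_zero, act_zero]
    | j+2 =>
      have h1 : act τ₀ (j+2) ((0:Fin 3) :: (List.replicate n 0 ++ [1])) =
          (0:Fin 3) :: act τ₀ (j+1) (List.replicate n 0 ++ [1]) := by
        simp [act, τ₀]
      rw [h1, ih (j+1)]
      by_cases hj : j = n
      · simp [hj]
      · rw [if_neg (by omega : ¬ j+1 = n+1), if_neg (by omega : ¬ j+2 = n+1+1)]

lemma tf_map : ∀ (k : ℕ) (ξ : ℕ → Fin 3) (n0 : ℕ), ξ n0 ≠ 0 → (∀ j < n0, ξ j = 0) →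
    tf ((List.range k).map ξ) =
      (List.range k).map (Function.update ξ n0 (tog (ξ n0))) := by
  intro k
  induction k with
  | zero => intros; rfl
  | succ k ih =>
    intro ξ n0 h0 hz
    rw [List.range_succ_eq_map, List.map_cons, List.map_cons, List.map_map, List.map_map]
    match n0 with
    | 0 =>
      have ht : (Function.update ξ 0 (tog (ξ 0))) ∘ Nat.succ = ξ ∘ Nat.succ := by
        funext j
        simp [Function.comp, Function.update_of_ne (Nat.succ_ne_zero j)]
      simp [tf, h0, Function.update_self, ht]
    | m+1 =>
      have hξ0 : ξ 0 = 0 := hz 0 (Nat.succ_pos m)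
      have ih' := ih (ξ ∘ Nat.succ) m (by simpa [Function.comp] using h0)
        (fun j hj => hz (j+1) (by omega))
      have ht : Function.update ξ (m+1) (tog (ξ (m+1))) ∘ Nat.succ =
          Function.update (ξ ∘ Nat.succ) m (tog ((ξ ∘ Nat.succ) m)) := by
        funext j
        by_cases hjm : j = m
        · subst hjm; simp [Function.comp]
        · simp [Function.comp, Function.update_of_ne hjm,
            Function.update_of_ne (by omega : j + 1 ≠ m + 1)]
      simp only [tf, if_pos hξ0]
      rw [ih', ht, Function.update_of_ne (Nat.succ_ne_zero m).symm]
      simp [hξ0]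

lemma pref_getD (g : ℕ → Fin 3) (n : ℕ) (d : Fin 3) :
    ((List.range (n+1)).map g).getD n d = g n := by simp [List.getD]

lemma orbit_finite (ξ : ℕ → Fin 3) : (orbitω τ₀ ξ).Finite := by
  by_cases hex : ∃ m, ξ m ≠ 0
  · have h0 : ξ (Nat.find hex) ≠ 0 := Nat.find_spec hex
    set n0 := Nat.find hex with hn0
    have hz : ∀ j < n0, ξ j = 0 := fun j hj => by
      have := Nat.find_min hex hj; simpa using this
    set ξ' : ℕ → Fin 3 := Function.update ξ n0 (tog (ξ n0)) with hξ'
    apply Set.Finite.subset ((Set.finite_singleton ξ').insert ξ)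
    rintro _ ⟨f, hf, rfl⟩
    have hP := sgp_cases hf
    have hpt : ∀ n, extω f ξ n = ξ n ∨ extω f ξ n = ξ' n := by
      intro n
      rcases hP ((List.range (n+1)).map ξ) with h | h
      · left; simp only [extω]; rw [h, pref_getD]
      · right; simp only [extω]; rw [h, tf_map (n+1) ξ n0 h0 hz, pref_getD]
    have hoff : ∀ n, n ≠ n0 → ξ' n = ξ n := fun n hn => Function.update_of_ne hn _ _
    simp only [Set.mem_insert_iff, Set.mem_singleton_iff]
    by_cases hc : extω f ξ n0 = ξ n0
    · left; funext n
      rcases hpt n with h | h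
      · exact h
      · by_cases hn : n = n0
        · subst hn; exact hc
        · rw [h, hoff n hn]
    · right; funext n
      rcases hpt n with h | h
      · by_cases hn : n = n0
        · subst hn; exact absurd h hc
        · rw [h]; exact (hoff n hn).symm
      · exact h
  · push_neg at hex
    apply Set.Finite.subset (Set.finite_singleton ξ)
    rintro _ ⟨f, hf, rfl⟩
    have hP := sgp_cases hf
    simp only [Set.mem_singleton_iff]
    funext n
    have hall : tf ((List.range (n+1)).map ξ) = (List.range (n+1)).map ξ :=
      tf_zero _ (by
        intro x hx
        simp only [List.mem_map, List.mem_range] at hx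
        obtain ⟨j, _, rfl⟩ := hx
        exact hex j)
    rcases hP ((List.range (n+1)).map ξ) with h | h
    · simp only [extω]; rw [h, pref_getD]
    · simp only [extω]; rw [h, hall, pref_getD]

end Mealy
namespace Mealy

/-- there is a Mealy automaton over a finite alphabet (with infinitely
many states) generating an infinite semigroup all of whose orbits on `A^ω` are finite. -/
theorem exists_infinite_sgp_all_orbits_finite :
    ∃ (Q A : Type) (_ : Infinite Q) (_ : Finite A) (τ : Q → A → A × Q),
      (Sgp τ : Set (Function.End (List A))).Infinite ∧
        ∀ ξ : ℕ → A, (orbitω τ ξ).Finite := by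
  refine ⟨ℕ, Fin 3, inferInstance, inferInstance, τ₀, ?_, orbit_finite⟩
  refine Set.infinite_of_injective_forall_mem
    (f := fun n : ℕ => (act τ₀ (n+1) : Function.End (List (Fin 3)))) ?_ ?_
  · intro n m h
    have h2 : act τ₀ (n+1) (List.replicate n 0 ++ [1]) =
        act τ₀ (m+1) (List.replicate n 0 ++ [1]) := congrFun h _
    rw [act_repl n (n+1), act_repl n (m+1)] at h2
    have h3 := List.append_cancel_left h2
    simp only [List.cons.injEq, and_true] at h3
    rw [if_true] at h3
    by_cases hm : m = n
    · exact hm.symm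
    · rw [if_neg (by omega : ¬ m+1 = n+1)] at h3
      exact absurd h3 (by decide)
  · intro n
    exact Submonoid.subset_closure ⟨n+1, rfl⟩

end Mealy
end

section
/- There exists a Mealy automaton 𝒜 = (Q, A, τ) with A a finite alphabet (and Q an infinite set of states) whose generated semigroup S contains a finitely generated infinite subsemigroup T such that every orbit T·ξ = {t·ξ : t ∈ T} with ξ ∈ A^ω is finite. -/
/-!
The automaton over `{0, 1}` has states `count j`, which copy a block of `1`s while counting
it, and `fill j`, which turn the first `0` among the next `j` letters into `1`; so the
generator `g = count 0` maps `1ᵏ0v` to `1ᵏ0v'`, where `v'` is `v` with its first `0` among the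
first `k` letters filled. On `1ᵏ 0 0ᵏ` the powers `g, …, gᵏ` give `k` different words, so
`T = ⟨g⟩` is infinite; but every power of `g` fixes each letter of `ξ = 1ᵏ0…` beyond position
`2k` (and fixes `1^ω`), so `T·ξ` lies in the finite set of sequences agreeing with `ξ` from
there on.
-/

theorem Subsemigroup.mem_closure_singleton_iff_exists_pow_succ {M : Type*} [Monoid M]
    {x y : M} : y ∈ Subsemigroup.closure {x} ↔ ∃ n : ℕ, x ^ (n + 1) = y := by
  constructor
  · intro hy
    induction hy using Subsemigroup.closure_induction with
    | mem y hy => exact ⟨0, by rw [pow_one, Set.mem_singleton_iff.mp hy]⟩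
    | mul a b _ _ iha ihb =>
        obtain ⟨n, rfl⟩ := iha
        obtain ⟨m, rfl⟩ := ihb
        exact ⟨n + m + 1, by rw [← pow_add]; ring_nf⟩
  · rintro ⟨n, rfl⟩
    induction n with
    | zero => simpa using Subsemigroup.subset_closure (Set.mem_singleton x)
    | succ n ih =>
        rw [pow_succ]
        exact Subsemigroup.mul_mem _ ih (Subsemigroup.subset_closure (Set.mem_singleton x))

theorem Set.finite_setOf_forall_le_imp_eq {A : Type*} [Finite A] (ξ : ℕ → A) (N : ℕ) :
    {η : ℕ → A | ∀ i, N ≤ i → η i = ξ i}.Finite := by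
  refine Set.Finite.of_finite_image (f := fun η (j : Fin N) => η j) (Set.toFinite _) ?_
  intro η₁ h₁ η₂ h₂ h
  funext i
  rcases lt_or_ge i N with hi | hi
  · exact congrFun h ⟨i, hi⟩
  · rw [h₁ i hi, h₂ i hi]

theorem List.map_range_eq_replicate_append {α : Type*} {ξ : ℕ → α} {a : α} {k m : ℕ}
    (h : ∀ i < k, ξ i = a) (hm : k < m) :
    ∃ v, (List.range m).map ξ = List.replicate k a ++ ξ k :: v := by
  have hlen : k < ((List.range m).map ξ).length := by simpa
  refine ⟨((List.range m).map ξ).drop (k + 1), (List.take_append_drop k _).symm.trans ?_⟩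
  rw [List.drop_eq_getElem_cons hlen, ← List.map_take, List.take_range, List.getElem_map,
    List.getElem_range, min_eq_left hm.le]
  congr
  exact List.eq_replicate_iff.mpr ⟨by simp, by simpa using h⟩

namespace Mealy

section Orbits

variable {A : Type*}

theorem extω_apply_of_drop_eq {f : Function.End (List A)} {ξ : ℕ → A} {N : ℕ}
    (h : ∀ m, (f ((List.range m).map ξ)).drop N = ((List.range m).map ξ).drop N)
    {i : ℕ} (hi : N ≤ i) : extω f ξ i = ξ i := by
  have hget : (f ((List.range (i + 1)).map ξ))[i]? = some (ξ i) := by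
    obtain ⟨j, rfl⟩ := Nat.exists_eq_add_of_le hi
    rw [← List.getElem?_drop, h, List.getElem?_drop]
    simp
  simp [extω, List.getD_eq_getElem?_getD, hget]

theorem finite_image_extω_of_drop_eq [Finite A] {S : Set (Function.End (List A))}
    {ξ : ℕ → A} {N : ℕ}
    (h : ∀ f ∈ S, ∀ m, (f ((List.range m).map ξ)).drop N = ((List.range m).map ξ).drop N) :
    ((fun f : Function.End (List A) => extω f ξ) '' S).Finite := by
  refine (Set.finite_setOf_forall_le_imp_eq ξ N).subset ?_
  rintro _ ⟨f, hf, rfl⟩ i hi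
  exact extω_apply_of_drop_eq (h f hf) hi

end Orbits

namespace FillAutomaton

inductive State
  | idle
  | count (j : ℕ)
  | fill (j : ℕ)

instance : Infinite State := Infinite.of_injective State.count fun _ _ => State.count.inj

def τ : State → Bool → Bool × State
  | .idle, a => (a, .idle)
  | .count j, true => (true, .count (j + 1))
  | .count j, false => (false, .fill j)
  | .fill 0, a => (a, .idle)
  | .fill (_ + 1), false => (true, .idle)
  | .fill (j + 1), true => (true, .fill j)

def countAct (j : ℕ) : List Bool → List Bool := act τ (.count j)

def fillAct (j : ℕ) : List Bool → List Bool := act τ (.fill j)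

@[simp] theorem act_idle : ∀ u : List Bool, act τ .idle u = u
  | [] => rfl
  | a :: u => by simp [act, τ, act_idle u]

@[simp] theorem fillAct_zero (u : List Bool) : fillAct 0 u = u := by
  cases u <;> simp [fillAct, act, τ]

@[simp] theorem fillAct_succ_false (j : ℕ) (u : List Bool) :
    fillAct (j + 1) (false :: u) = true :: u := by
  simp [fillAct, act, τ]

@[simp] theorem fillAct_succ_true (j : ℕ) (u : List Bool) :
    fillAct (j + 1) (true :: u) = true :: fillAct j u := by
  simp [fillAct, act, τ]

@[simp] theorem countAct_true (j : ℕ) (u : List Bool) :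
    countAct j (true :: u) = true :: countAct (j + 1) u := by
  simp [countAct, act, τ]

@[simp] theorem countAct_false (j : ℕ) (u : List Bool) :
    countAct j (false :: u) = false :: fillAct j u := by
  simp [countAct, fillAct, act, τ]

theorem drop_fillAct : ∀ (j : ℕ) (u : List Bool), (fillAct j u).drop j = u.drop j
  | 0, u => by simp
  | _ + 1, [] => rfl
  | _ + 1, false :: u => by simp
  | j + 1, true :: u => by simpa using drop_fillAct j u

theorem drop_iterate_fillAct (j n : ℕ) (u : List Bool) :
    ((fillAct j)^[n] u).drop j = u.drop j := by
  induction n with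
  | zero => rfl
  | succ n ih => rw [Function.iterate_succ_apply', drop_fillAct, ih]

theorem fillAct_replicate_true_append {p j : ℕ} (hp : p < j) (w : List Bool) :
    fillAct j (List.replicate p true ++ false :: w) = List.replicate (p + 1) true ++ w := by
  obtain ⟨j, rfl⟩ := Nat.exists_eq_add_of_lt hp
  induction p generalizing j with
  | zero => simp
  | succ p ih =>
      simpa [List.replicate_succ, Nat.add_right_comm p 1 j] using ih (j := j) (by omega)

theorem iterate_fillAct_replicate_false {k n : ℕ} (hn : n ≤ k) :
    (fillAct k)^[n] (List.replicate k false)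
      = List.replicate n true ++ List.replicate (k - n) false := by
  induction n with
  | zero => simp
  | succ n ih =>
      rw [Function.iterate_succ_apply', ih (by omega),
        show k - n = k - (n + 1) + 1 by omega, List.replicate_succ,
        fillAct_replicate_true_append (by omega)]

@[simp] theorem countAct_replicate_true (j m : ℕ) :
    countAct j (List.replicate m true) = List.replicate m true := by
  induction m generalizing j with
  | zero => rfl
  | succ m ih => simp [List.replicate_succ, ih]

theorem countAct_replicate_true_append (j k : ℕ) (v : List Bool) :
    countAct j (List.replicate k true ++ false :: v)
      = List.replicate k true ++ false :: fillAct (j + k) v := by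
  induction k generalizing j with
  | zero => simp
  | succ k ih => simp [List.replicate_succ, ih, Nat.add_assoc, Nat.add_comm 1 k]

theorem iterate_countAct_replicate_true_append (k n : ℕ) (v : List Bool) :
    (countAct 0)^[n] (List.replicate k true ++ false :: v)
      = List.replicate k true ++ false :: (fillAct k)^[n] v := by
  induction n with
  | zero => rfl
  | succ n ih =>
      rw [Function.iterate_succ_apply', ih, countAct_replicate_true_append, Nat.zero_add,
        Function.iterate_succ_apply']

theorem iterate_countAct_injective : Function.Injective fun n => (countAct 0)^[n] := by
  have hcount : ∀ {k n : ℕ}, n ≤ k →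
      ((countAct 0)^[n] (List.replicate k true ++ false :: List.replicate k false)).count true
        = k + n := by
    intro k n hn
    rw [iterate_countAct_replicate_true_append, iterate_fillAct_replicate_false hn]
    simp [List.count_replicate]
  intro a b hab
  have := congrFun hab (List.replicate (max a b) true ++ false :: List.replicate (max a b) false)
  have ha := hcount (le_max_left a b)
  have hb := hcount (le_max_right a b)
  simp only at this
  rw [this] at ha
  omega

theorem iterate_countAct_map_range_eq (ξ : ℕ → Bool) {n m : ℕ} (h : ∀ i < m, ξ i = true) :
    (countAct 0)^[n] ((List.range m).map ξ) = (List.range m).map ξ := by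
  have hrep : (List.range m).map ξ = List.replicate m true :=
    List.eq_replicate_iff.mpr ⟨by simp, by simpa using h⟩
  rw [hrep]
  exact Function.iterate_fixed (countAct_replicate_true 0 m) n

theorem exists_drop_iterate_countAct_map_range (ξ : ℕ → Bool) : ∃ N, ∀ n m,
    ((countAct 0)^[n] ((List.range m).map ξ)).drop N = ((List.range m).map ξ).drop N := by
  by_cases hξ : ∃ k, ξ k = false
  · set k := Nat.find hξ
    have hk : ξ k = false := Nat.find_spec hξ
    have hlt : ∀ i < k, ξ i = true := fun i hi => by simpa using Nat.find_min hξ hi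
    refine ⟨2 * k + 1, fun n m => ?_⟩
    rcases le_or_gt m k with hm | hm
    · rw [iterate_countAct_map_range_eq ξ fun i hi => hlt i (by omega)]
    · obtain ⟨v, hv⟩ := List.map_range_eq_replicate_append hlt hm
      rw [hv, hk, iterate_countAct_replicate_true_append]
      simp [List.drop_append, show 2 * k + 1 - k = k + 1 by omega, drop_iterate_fillAct]
  · simp only [not_exists, Bool.not_eq_false] at hξ
    exact ⟨0, fun n m => by rw [iterate_countAct_map_range_eq ξ fun i _ => by simpa using hξ i]⟩

end FillAutomaton

open FillAutomaton in
/-- there is a Mealy automaton over a finite alphabet (with infinitely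
many states) whose semigroup contains a finitely generated infinite subsemigroup `T`
all of whose orbits on `A^ω` are finite. -/
theorem exists_fg_infinite_subsemigroup_all_orbits_finite :
    ∃ (Q A : Type) (_ : Infinite Q) (_ : Finite A) (τ : Q → A → A × Q)
      (T : Subsemigroup (Function.End (List A))),
      (T : Set (Function.End (List A))) ⊆ (Sgp τ : Set (Function.End (List A))) ∧
        (∃ F : Set (Function.End (List A)), F.Finite ∧ T = Subsemigroup.closure F) ∧
        (T : Set (Function.End (List A))).Infinite ∧
        ∀ ξ : ℕ → A, ((fun f : Function.End (List A) => extω f ξ) ''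
          (T : Set (Function.End (List A)))).Finite := by
  let g : Function.End (List Bool) := countAct 0
  have hg : g ∈ Sgp FillAutomaton.τ := Submonoid.subset_closure ⟨.count 0, rfl⟩
  refine ⟨State, Bool, inferInstance, inferInstance, FillAutomaton.τ, Subsemigroup.closure {g},
    ?_, ⟨{g}, Set.finite_singleton g, rfl⟩, ?_, fun ξ => ?_⟩
  · exact Subsemigroup.closure_le (S := (Sgp FillAutomaton.τ).toSubsemigroup).mpr
      (Set.singleton_subset_iff.mpr hg)
  · exact Set.infinite_of_injective_forall_mem
      (iterate_countAct_injective.comp Nat.succ_injective)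
      fun n => Subsemigroup.mem_closure_singleton_iff_exists_pow_succ.mpr ⟨n, rfl⟩
  · obtain ⟨N, hN⟩ := exists_drop_iterate_countAct_map_range ξ
    refine finite_image_extω_of_drop_eq (N := N) fun f hf => ?_
    obtain ⟨n, rfl⟩ := Subsemigroup.mem_closure_singleton_iff_exists_pow_succ.mp hf
    exact hN (n + 1)

end Mealy
end
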